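/- arXiv:2003.09109 — 6 statements merged into one kernel-verified Lean document; each statement's English description precedes it below -/
import Mathlib

section
/- Let Ω be a finite set, F ≤ Sym(Ω) a permutation group, p a prime, and F(p) ≤ F a p-Sylow subgroup of F. If the partition of Ω into F-orbits coincides with the partition of Ω into F(p)-orbits, then for every ω ∈ Ω the stabilizer F(p)_ω is a p-Sylow subgroup of the stabilizer F_ω. -/
/-!
Orbit–stabilizer gives `[F : F_ω] = |F·ω|` and `[F(p) : F(p)_ω] = |F(p)·ω|`; when the two orbits
agree, comparing the two factorizations of `[F : F(p)_ω]` gives `[F_ω : F(p)_ω] = [F : F(p)]`,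
which is prime to `p`. A `p`-subgroup of index prime to `p` is Sylow.
-/

/-- `H` is a `p`-Sylow subgroup of `K` (both subgroups of an ambient group `G`):
`H` is a `p`-subgroup of `K` that is maximal among `p`-subgroups of `K`. -/
def IsSylowIn {G : Type*} [Group G] (p : ℕ) (H K : Subgroup G) : Prop :=
  H ≤ K ∧ IsPGroup p H ∧
    ∀ Q : Subgroup G, Q ≤ K → IsPGroup p Q → H ≤ Q → Q = H

open MulAction Subgroup

section OrbitStabilizer

variable {G α : Type*} [Group G] [MulAction G α]

theorem relIndex_stabilizer_eq_ncard_orbit (K : Subgroup G) (a : α) :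
    (stabilizer G a).relIndex K = (orbit K a).ncard := by
  have hstab : (stabilizer G a).subgroupOf K = stabilizer K a := by
    ext g
    simp only [mem_subgroupOf, mem_stabilizer_iff]
    rfl
  rw [relIndex, hstab, index_stabilizer]

theorem relIndex_inf_stabilizer_eq_of_orbit_eq {H K : Subgroup G} (hHK : H ≤ K) {a : α}
    (hfin : (orbit K a).Finite) (horb : orbit K a = orbit H a) :
    (H ⊓ stabilizer G a).relIndex (K ⊓ stabilizer G a) = H.relIndex K := by
  have hpos : 0 < (orbit K a).ncard := (Set.ncard_pos hfin).mpr ⟨a, mem_orbit_self a⟩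
  have hfactor :
      (H ⊓ stabilizer G a).relIndex (K ⊓ stabilizer G a) * (orbit K a).ncard =
        H.relIndex K * (orbit K a).ncard := by
    calc (H ⊓ stabilizer G a).relIndex (K ⊓ stabilizer G a) * (orbit K a).ncard
        = (H ⊓ stabilizer G a).relIndex (K ⊓ stabilizer G a) *
            (K ⊓ stabilizer G a).relIndex K := by
          rw [inf_relIndex_left, relIndex_stabilizer_eq_ncard_orbit]
      _ = (H ⊓ stabilizer G a).relIndex H * H.relIndex K := by
          rw [relIndex_mul_relIndex _ _ _ (inf_le_inf_right _ hHK) inf_le_left,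
            relIndex_mul_relIndex _ _ _ inf_le_left hHK]
      _ = H.relIndex K * (orbit K a).ncard := by
          rw [inf_relIndex_left, relIndex_stabilizer_eq_ncard_orbit, horb, mul_comm]
  exact Nat.eq_of_mul_eq_mul_right hpos hfactor

end OrbitStabilizer

section Sylow

variable {G : Type*} [Group G] {p : ℕ} [Fact p.Prime] {H K : Subgroup G}

theorem isSylowIn_of_not_dvd_relIndex (hHK : H ≤ K) (hH : IsPGroup p H)
    (hndvd : ¬ p ∣ H.relIndex K) : IsSylowIn p H K := by
  refine ⟨hHK, hH, fun Q hQK hQ hHQ => le_antisymm ?_ hHQ⟩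
  have hQndvd : ¬ p ∣ (H.subgroupOf Q).index := fun h =>
    hndvd (h.trans (Dvd.intro _ (relIndex_mul_relIndex H Q K hHQ hQK)))
  have : (H.subgroupOf Q).FiniteIndex := ⟨fun h0 => hQndvd (h0 ▸ dvd_zero p)⟩
  obtain ⟨n, hn⟩ := hQ.index (H.subgroupOf Q)
  cases n with
  | zero => exact relIndex_eq_one.mp hn
  | succ n => exact absurd (hn ▸ dvd_pow_self p n.succ_ne_zero) hQndvd

def IsSylowIn.toSylow (h : IsSylowIn p H K) : Sylow p K where
  toSubgroup := H.subgroupOf K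
  isPGroup' := h.2.1.of_equiv (subgroupOfEquivOfLe h.1).symm
  is_maximal' {Q} hQ hHQ := by
    have hHQ' : H ≤ Q.map K.subtype := fun g hg => ⟨⟨g, h.1 hg⟩, hHQ hg, rfl⟩
    have hmap := h.2.2 _ (map_subtype_le Q) (hQ.map _) hHQ'
    rw [← comap_map_eq_self_of_injective K.subtype_injective Q, hmap]
    rfl

theorem IsSylowIn.not_dvd_relIndex [Finite K] (h : IsSylowIn p H K) :
    ¬ p ∣ H.relIndex K :=
  h.toSylow.not_dvd_index

end Sylow

/-- If the partition of `Ω` into `F`-orbits coincides with the partition into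
`F(p)`-orbits, then each point stabilizer `F(p)_ω` is a `p`-Sylow subgroup of `F_ω`. -/
theorem stmt1 {Ω : Type*} [Fintype Ω] (p : ℕ) (hp : p.Prime)
    (F Fp : Subgroup (Equiv.Perm Ω)) (hSylow : IsSylowIn p Fp F)
    (horb : ∀ ω : Ω, MulAction.orbit F ω = MulAction.orbit Fp ω) :
    ∀ ω : Ω,
      IsSylowIn p (Fp ⊓ MulAction.stabilizer (Equiv.Perm Ω) ω)
        (F ⊓ MulAction.stabilizer (Equiv.Perm Ω) ω) := by
  have : Fact p.Prime := ⟨hp⟩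
  intro ω
  refine isSylowIn_of_not_dvd_relIndex (inf_le_inf_right _ hSylow.1)
    (hSylow.2.1.to_le inf_le_left) ?_
  rw [relIndex_inf_stabilizer_eq_of_orbit_eq hSylow.1 (Set.toFinite _) (horb ω)]
  exact hSylow.not_dvd_relIndex
end

section
/- Let p be a prime, n ∈ ℕ, Ω a finite set with |Ω| = pⁿ, F ≤ Sym(Ω) a transitive permutation group, and F(p) ≤ F a p-Sylow subgroup of F. Then for every ω ∈ Ω the stabilizer F(p)_ω is a p-Sylow subgroup of the stabilizer F_ω. -/
/-- If `|Ω| = pⁿ` and `F ≤ Sym(Ω)` is transitive with `p`-Sylow subgroup `F(p)`, then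
each point stabilizer `F(p)_ω` is a `p`-Sylow subgroup of `F_ω`. -/
theorem stmt2 {Ω : Type*} [Fintype Ω] (p n : ℕ) (hp : p.Prime)
    (hcard : Fintype.card Ω = p ^ n)
    (F Fp : Subgroup (Equiv.Perm Ω)) (htrans : MulAction.IsPretransitive F Ω)
    (hSylow : IsSylowIn p Fp F) :
    ∀ ω : Ω,
      IsSylowIn p (Fp ⊓ MulAction.stabilizer (Equiv.Perm Ω) ω)
        (F ⊓ MulAction.stabilizer (Equiv.Perm Ω) ω) := by
  obtain ⟨hFpF, hFpP, hmax⟩ := hSylow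
  have : Fact p.Prime := ⟨hp⟩
  intro ω
  set S := MulAction.stabilizer (Equiv.Perm Ω) ω with hS
  set A := F ⊓ S with hA
  set B := Fp ⊓ S with hB
  have hBA : B ≤ A := inf_le_inf_right S hFpF
  have hBFp : B ≤ Fp := inf_le_left
  have hAF : A ≤ F := inf_le_left
  -- Fp.subgroupOf F is a Sylow subgroup of F
  have hP' : IsPGroup p (Fp.subgroupOf F) :=
    hFpP.of_equiv (Subgroup.subgroupOfEquivOfLe hFpF).symm
  obtain ⟨Q, hQ⟩ := hP'.exists_le_sylow
  have hmapFp : (Fp.subgroupOf F).map F.subtype = Fp := by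
    rw [Subgroup.subgroupOf_map_subtype, inf_eq_left.mpr hFpF]
  have hQeq : (Q : Subgroup F) = Fp.subgroupOf F := by
    have h1 : ((Q : Subgroup F).map F.subtype) = Fp := by
      apply hmax
      · exact Subgroup.map_subtype_le _
      · exact Q.2.map F.subtype
      · rw [← hmapFp]; exact Subgroup.map_mono hQ
    apply Subgroup.map_injective F.subtype_injective
    rw [h1, hmapFp]
  have hm : ¬ p ∣ (Fp.subgroupOf F).index := by
    rw [← hQeq]; exact Q.not_dvd_index
  set m := (Fp.subgroupOf F).index with hmdef
  -- cards
  have cBpos : 0 < Nat.card B := Nat.card_pos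
  have hcΩ : Nat.card Ω = p ^ n := by rw [Nat.card_eq_fintype_card, hcard]
  -- orbit-stabilizer for F
  have hstabF : MulAction.stabilizer F ω = A.subgroupOf F := by
    ext g
    simp [Subgroup.mem_subgroupOf, MulAction.mem_stabilizer_iff, hA, hS]
    rfl
  have e1 : p ^ n * Nat.card A = Nat.card F := by
    have := Subgroup.index_mul_card (MulAction.stabilizer F ω)
    rw [MulAction.index_stabilizer_of_transitive, hcΩ, hstabF] at this
    rwa [Nat.card_congr (Subgroup.subgroupOfEquivOfLe hAF).toEquiv] at this
  -- index of Fp in F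
  have e2 : m * Nat.card Fp = Nat.card F := by
    have := Subgroup.index_mul_card (Fp.subgroupOf F)
    rwa [Nat.card_congr (Subgroup.subgroupOfEquivOfLe hFpF).toEquiv] at this
  -- orbit-stabilizer for Fp
  have hstabFp : MulAction.stabilizer Fp ω = B.subgroupOf Fp := by
    ext g
    simp [Subgroup.mem_subgroupOf, MulAction.mem_stabilizer_iff, hB, hS]
    rfl
  set t := (MulAction.stabilizer Fp ω).index with htdef
  have e3 : t * Nat.card B = Nat.card Fp := by
    have h := Subgroup.index_mul_card (B.subgroupOf Fp)
    rw [Nat.card_congr (Subgroup.subgroupOfEquivOfLe hBFp).toEquiv] at h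
    rw [htdef, hstabFp]; exact h
  have ht_le : t ≤ p ^ n := by
    rw [htdef, MulAction.index_stabilizer]
    calc (MulAction.orbit Fp ω).ncard ≤ (Set.univ : Set Ω).ncard :=
          Set.ncard_le_ncard (Set.subset_univ _) (Set.toFinite _)
      _ = p ^ n := by rw [Set.ncard_univ, hcΩ]
  -- t is a power of p
  obtain ⟨k, hk⟩ := hFpP.exists_card_eq
  have ht_dvd : t ∣ p ^ k := by
    rw [← hk, htdef]; exact Subgroup.index_dvd_card _
  obtain ⟨a, ha_le, ha⟩ := (Nat.dvd_prime_pow hp).mp ht_dvd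
  -- relative index r
  obtain ⟨r, hr⟩ := Subgroup.card_dvd_of_le hBA
  have key : p ^ n * r = m * t := by
    have h := e1
    rw [hr, ← e2, ← e3] at h
    have := Nat.eq_of_mul_eq_mul_right cBpos
      (by linarith [h] : p ^ n * r * Nat.card B = m * t * Nat.card B)
    exact this
  -- show a = n hence r = m
  have ha_n : a = n := by
    have h1 : p ^ a ≤ p ^ n := ha ▸ ht_le
    have h2 : a ≤ n := by
      by_contra hcon
      exact absurd h1 (not_le.mpr (Nat.pow_lt_pow_right hp.one_lt (not_le.mp hcon)))
    rcases h2.lt_or_eq with hlt | heq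
    · exfalso
      apply hm
      have hkey : p ^ n * r = m * p ^ a := by rw [← ha]; exact key
      have h1 : p ^ a * p ∣ p ^ a * m := by
        rw [← pow_succ]
        calc p ^ (a + 1) ∣ p ^ n := pow_dvd_pow p hlt
          _ ∣ p ^ n * r := dvd_mul_right _ _
          _ = p ^ a * m := by rw [hkey, mul_comm]
      exact (Nat.mul_dvd_mul_iff_left (pow_pos hp.pos a)).mp h1
    · exact heq
  have hr_m : r = m := by
    have h2 : p ^ n * r = m * p ^ n := by rw [key, ha, ha_n]
    rw [mul_comm m (p ^ n)] at h2
    exact Nat.eq_of_mul_eq_mul_left (pow_pos hp.pos n) h2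
  -- now cA = cB * m
  have hcA : Nat.card A = Nat.card B * m := by rw [hr, hr_m]
  refine ⟨hBA, hFpP.to_le hBFp, ?_⟩
  intro R hRA hRp hBR
  obtain ⟨l, hl⟩ := hRp.exists_card_eq
  obtain ⟨b, hb⟩ := (hFpP.to_le hBFp).exists_card_eq
  have hRdvd : Nat.card R ∣ Nat.card B * m := hcA ▸ Subgroup.card_dvd_of_le hRA
  have hcop : Nat.Coprime (p ^ l) m :=
    Nat.Coprime.pow_left _ ((hp.coprime_iff_not_dvd).mpr hm)
  have : Nat.card R ∣ Nat.card B := by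
    rw [hl, hb] at hRdvd ⊢
    exact (Nat.Coprime.dvd_of_dvd_mul_right hcop hRdvd)
  exact (Subgroup.eq_of_le_of_card_ge hBR (Nat.le_of_dvd cBpos this)).symm
end

section
/- Let Ω be a finite set with |Ω| = d ≥ 3, let F = Sym(Ω), let p be a prime, let F(p) ≤ F be a p-Sylow subgroup, and let p^s (s ∈ ℕ, s ≥ 0) be the maximal power of p dividing d. Then F(p)_ω is a p-Sylow subgroup of F_ω for all ω ∈ Ω if and only if either (i) p > d, or (ii) s ≥ 1 and p^{s+1} > d. -/
open MulAction Subgroup Equiv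
open scoped Finset

theorem Nat.factorization_eq_of_dvd_of_not_dvd {p n k : ℕ} (hp : p.Prime) (hk : p ^ k ∣ n)
    (hk' : ¬p ^ (k + 1) ∣ n) : n.factorization p = k := by
  have hn : n ≠ 0 := by rintro rfl; exact hk' (dvd_zero _)
  rw [Nat.factorization_def n hp, padicValNat_def' hp.ne_one hn,
    multiplicity_eq_of_dvd_of_not_dvd hk hk']

theorem lt_or_lt_pow_succ_iff_of_pow_dvd {p d s : ℕ} (hs : p ^ s ∣ d) (hd : d ≠ 0) :
    d < p ∨ (1 ≤ s ∧ d < p ^ (s + 1)) ↔ d < p ^ (s + 1) := by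
  rcases s with - | s
  · simp
  · have : p ≤ d := (Nat.le_self_pow s.succ_ne_zero p).trans (Nat.le_of_dvd (by omega) hs)
    omega

theorem relIndex_stabilizer_eq_card_orbit {G X : Type*} [Group G] [MulAction G X]
    (H : Subgroup G) (x : X) : (stabilizer G x).relIndex H = Nat.card (orbit H x) := by
  rw [relIndex, show (stabilizer G x).subgroupOf H = stabilizer H x from rfl, index_stabilizer,
    Nat.card_coe_set_eq]

section Sylow

variable {G : Type*} [Group G] [Finite G] {p : ℕ} [Fact p.Prime]

theorem isSylowIn_iff_card {H K : Subgroup G} (hHK : H ≤ K) (hH : IsPGroup p H) :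
    IsSylowIn p H K ↔ Nat.card H = p ^ (Nat.card K).factorization p := by
  have hp : p.Prime := Fact.out
  constructor
  · rintro ⟨-, -, hmax⟩
    obtain ⟨P, hP⟩ := (hH.of_equiv (subgroupOfEquivOfLe hHK).symm).exists_le_sylow
    have hHP : H ≤ (P : Subgroup K).map K.subtype := by
      calc H = (H.subgroupOf K).map K.subtype := by
              rw [subgroupOf_map_subtype, inf_eq_left.2 hHK]
        _ ≤ (P : Subgroup K).map K.subtype := map_mono hP
    rw [← hmax _ (map_subtype_le _) (P.isPGroup'.map _) hHP,
      card_map_of_injective K.subtype_injective, P.card_eq_multiplicity]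
  · intro hcard
    refine ⟨hHK, hH, fun Q hQK hQ hHQ => (eq_of_le_of_card_ge hHQ ?_).symm⟩
    obtain ⟨n, hn⟩ := IsPGroup.iff_card.mp hQ
    have hnK : p ^ n ∣ Nat.card K := hn ▸ card_dvd_of_le hQK
    rw [hn, hcard]
    exact Nat.pow_le_pow_right hp.pos ((hp.pow_dvd_iff_le_factorization Nat.card_pos.ne').mp hnK)

theorem isSylowIn_inf_iff_relIndex_lt (P : Sylow p G) (H : Subgroup G) :
    IsSylowIn p (P ⊓ H) H ↔ H.relIndex P < p ^ (H.index.factorization p + 1) := by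
  have hp : p.Prime := Fact.out
  set N := (Nat.card G).factorization p
  have hN : N = (Nat.card H).factorization p + H.index.factorization p := by
    rw [← Finsupp.add_apply, ← Nat.factorization_mul Nat.card_pos.ne' H.index_ne_zero_of_finite,
      H.card_mul_index]
  have hsplit : Nat.card (P ⊓ H : Subgroup G) * H.relIndex P = p ^ N := by
    have := relIndex_inf_mul_relIndex ⊥ H P
    rwa [bot_inf_eq, relIndex_bot_left, relIndex_bot_left, P.card_eq_multiplicity,
      inf_comm] at this
  obtain ⟨t, htN, ht⟩ := (Nat.dvd_prime_pow hp).mp (Dvd.intro_left _ hsplit)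
  have hcard : Nat.card (P ⊓ H : Subgroup G) = p ^ (N - t) := by
    refine Nat.eq_of_mul_eq_mul_right (pow_pos hp.pos t) ?_
    rw [← ht, hsplit, ht, ← pow_add, Nat.sub_add_cancel htN]
  have hle : N - t ≤ (Nat.card H).factorization p :=
    (hp.pow_dvd_iff_le_factorization Nat.card_pos.ne').mp (hcard ▸ card_dvd_of_le inf_le_right)
  rw [isSylowIn_iff_card inf_le_right P.isPGroup'.to_inf_left, hcard, ht,
    Nat.pow_right_injective hp.two_le |>.eq_iff, Nat.pow_lt_pow_iff_right hp.one_lt]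
  omega

end Sylow

section Perm

variable {α : Type*} [Fintype α] [DecidableEq α]

theorem Equiv.Perm.IsCycle.card_support_le_card_orbit {c : Perm α} (hc : c.IsCycle)
    {H : Subgroup (Perm α)} (hcH : c ∈ H) {x : α} (hx : x ∈ c.support) :
    #c.support ≤ Nat.card (orbit H x) := by
  rw [Nat.card_coe_set_eq, ← Set.ncard_coe_finset]
  refine Set.ncard_le_ncard fun y hy => ?_
  obtain ⟨i, rfl⟩ := hc.exists_zpow_eq (Perm.mem_support.mp hx) (Perm.mem_support.mp hy)
  exact ⟨⟨c ^ i, zpow_mem hcH i⟩, rfl⟩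

theorem Sylow.exists_mem_cycleType_eq_singleton {p k : ℕ} [Fact p.Prime] (P : Sylow p (Perm α))
    (hk : k ≠ 0) (h : p ^ k ≤ Fintype.card α) : ∃ c ∈ P, c.cycleType = {p ^ k} := by
  have h2 : 2 ≤ p ^ k := (Fact.out : p.Prime).two_le.trans (Nat.le_self_pow hk p)
  obtain ⟨c, hc⟩ := (Perm.exists_with_cycleType_iff α (m := {p ^ k})).mpr
    ⟨by simpa using h, by simpa using h2⟩
  have hpc : IsPGroup p (zpowers c) :=
    IsPGroup.iff_card.mpr ⟨k, by rw [Nat.card_zpowers, ← Perm.lcm_cycleType, hc,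
      Multiset.lcm_singleton, normalize_eq]⟩
  obtain ⟨Q, hcQ⟩ := hpc.exists_le_sylow
  obtain ⟨g, rfl⟩ := exists_smul_eq (Perm α) Q P
  refine ⟨g * c * g⁻¹, ?_, by rw [Perm.cycleType_conj, hc]⟩
  exact smul_mem_pointwise_smul c (MulAut.conj g) (Q : Subgroup (Perm α)) (hcQ (mem_zpowers c))

theorem Sylow.exists_pow_le_card_orbit {p k : ℕ} [Fact p.Prime] (P : Sylow p (Perm α))
    (hk : k ≠ 0) (h : p ^ k ≤ Fintype.card α) :
    ∃ x : α, p ^ k ≤ Nat.card (orbit (P : Subgroup (Perm α)) x) := by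
  obtain ⟨c, hcP, hc⟩ := P.exists_mem_cycleType_eq_singleton hk h
  have hcycle : c.IsCycle := Perm.card_cycleType_eq_one.mp (by simp [hc])
  have hsupp : #c.support = p ^ k := by
    rw [← Perm.sum_cycleType, hc, Multiset.sum_singleton]
  obtain ⟨x, hx⟩ := hcycle.nonempty_support
  exact ⟨x, hsupp ▸ hcycle.card_support_le_card_orbit hcP hx⟩

end Perm

theorem stmt4_general {Ω : Type*} [Fintype Ω] (p d s : ℕ) (hp : p.Prime)
    (hd : Fintype.card Ω = d)
    (hs : p ^ s ∣ d ∧ ¬ p ^ (s + 1) ∣ d)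
    (Fp : Subgroup (Equiv.Perm Ω)) (hSylow : IsSylowIn p Fp ⊤) :
    (∀ ω : Ω,
        IsSylowIn p (Fp ⊓ MulAction.stabilizer (Equiv.Perm Ω) ω)
          ((⊤ : Subgroup (Equiv.Perm Ω)) ⊓ MulAction.stabilizer (Equiv.Perm Ω) ω)) ↔
      d < p ∨ (1 ≤ s ∧ d < p ^ (s + 1)) := by
  classical
  have : Fact p.Prime := ⟨hp⟩
  have hd0 : d ≠ 0 := by rintro rfl; exact hs.2 (dvd_zero _)
  obtain ⟨P, rfl⟩ : ∃ P : Sylow p (Perm Ω), (P : Subgroup (Perm Ω)) = Fp :=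
    ⟨⟨Fp, hSylow.2.1, fun hQ hle => hSylow.2.2 _ le_top hQ hle⟩, rfl⟩
  have hcrit (ω : Ω) :
      IsSylowIn p (P ⊓ stabilizer (Perm Ω) ω) (⊤ ⊓ stabilizer (Perm Ω) ω) ↔
        Nat.card (orbit (P : Subgroup (Perm Ω)) ω) < p ^ (s + 1) := by
    rw [top_inf_eq, isSylowIn_inf_iff_relIndex_lt P, relIndex_stabilizer_eq_card_orbit,
      index_stabilizer_of_transitive, Nat.card_eq_fintype_card (α := Ω), hd,
      Nat.factorization_eq_of_dvd_of_not_dvd hp hs.1 hs.2]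
  simp only [hcrit, lt_or_lt_pow_succ_iff_of_pow_dvd hs.1 hd0]
  constructor
  · intro h
    by_contra! hle
    obtain ⟨ω, hω⟩ := P.exists_pow_le_card_orbit s.succ_ne_zero (hd ▸ hle)
    exact (h ω).not_ge hω
  · intro h ω
    calc Nat.card (orbit (P : Subgroup (Perm Ω)) ω)
        ≤ Nat.card Ω := Nat.card_le_card_of_injective _ Subtype.val_injective
      _ = d := by rw [Nat.card_eq_fintype_card, hd]
      _ < p ^ (s + 1) := h

/-- For `F = Sym(Ω)` with `|Ω| = d ≥ 3`, a `p`-Sylow subgroup `F(p)` of `F`, and `p^s`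
the maximal power of `p` dividing `d`: the stabilizer `F(p)_ω` is a `p`-Sylow subgroup
of `F_ω` for all `ω` iff `p > d`, or `s ≥ 1` and `p^{s+1} > d`. -/
theorem stmt4 {Ω : Type*} [Fintype Ω] (p d s : ℕ) (hp : p.Prime)
    (hd : Fintype.card Ω = d) (hd3 : 3 ≤ d)
    (hs : p ^ s ∣ d ∧ ¬ p ^ (s + 1) ∣ d)
    (Fp : Subgroup (Equiv.Perm Ω)) (hSylow : IsSylowIn p Fp ⊤) :
    (∀ ω : Ω,
        IsSylowIn p (Fp ⊓ MulAction.stabilizer (Equiv.Perm Ω) ω)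
          ((⊤ : Subgroup (Equiv.Perm Ω)) ⊓ MulAction.stabilizer (Equiv.Perm Ω) ω)) ↔
      d < p ∨ (1 ≤ s ∧ d < p ^ (s + 1)) :=
  stmt4_general p d s hp hd hs Fp hSylow
end

section
/- Let Ω be a finite set with |Ω| = d ≥ 3, let F = Alt(Ω) be the alternating group on Ω, let p be a prime, let F(p) ≤ F be a p-Sylow subgroup, and let p^s (s ∈ ℕ, s ≥ 0) be the maximal power of p dividing d. Then F(p)_ω is a p-Sylow subgroup of F_ω for all ω ∈ Ω if and only if either (i) p > d, or (ii) s ≥ 1 and p^{s+1} > d, or (iii) d = 3 and p = 2. -/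
/-!
By orbit–stabilizer, if `P` is Sylow in `K` then `P_ω` is Sylow in `K_ω` exactly when `|P·ω|` is
the `p`-part of `|K·ω|`. As `Alt(Ω)` is transitive for `d ≥ 3`, the condition of the theorem says
that every `F(p)`-orbit has `p^s` points.

If `d < p^{s+1}` this is automatic: a `F(p)`-orbit has `p`-power size at most `d`, and it is
divisible by `p^s` since `F(p)_ω` is a `p`-subgroup of `F_ω`. Conversely, suppose all orbits have
`p^s` points. If `s = 0`, then `F(p) = 1`, so `p ∤ d!/2`, i.e. `p > d` or `(d, p) = (3, 2)`.
If `s ≥ 1`, `F(p)` lies in the Young subgroup `Y ≅ Sym(p^s)^m` of its `m = d/p^s` orbits; `Y`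
contains a transposition, so `F(p) ≤ Alt ∩ Y` of index `2` in `Y` gives
`v_p(d!) ≤ m · v_p((p^s)!)`. Legendre's formula `v_p((p^s m)!) = v_p(m!) + m · v_p((p^s)!)`
then forces `p ∤ m!`, i.e. `m < p`, so `d = m p^s < p^{s+1}`.
-/

open Equiv MulAction Nat

theorem Nat.factorization_factorial_pow_mul {p : ℕ} (hp : p.Prime) (m : ℕ) :
    ∀ s : ℕ, (p ^ s * m)!.factorization p = (m)!.factorization p + m * (p ^ s)!.factorization p
  | 0 => by simp
  | s + 1 => by
    rw [pow_succ', mul_assoc, factorization_factorial_mul hp, factorization_factorial_mul hp,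
      Nat.factorization_factorial_pow_mul hp m s]
    ring

theorem Nat.lt_of_factorization_factorial_pow_mul_le {p s m : ℕ} (hp : p.Prime)
    (h : (p ^ s * m)!.factorization p ≤ m * (p ^ s)!.factorization p) : m < p := by
  rw [Nat.factorization_factorial_pow_mul hp, add_le_iff_nonpos_left, nonpos_iff_eq_zero,
    Nat.factorization_eq_zero_iff] at h
  simpa [hp, factorial_ne_zero, hp.dvd_factorial] using h

theorem Nat.card_eq_card_mul_of_card_fiber {Ω ι : Type*} [Finite Ω] [Finite ι] {f : Ω → ι}
    {n : ℕ} (hf : ∀ i, Nat.card {a // f a = i} = n) : Nat.card Ω = Nat.card ι * n := by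
  have := Fintype.ofFinite ι
  rw [← Nat.card_congr (Equiv.sigmaFiberEquiv f), Nat.card_sigma]
  simp [hf]

section Sylow

variable {G : Type*} [Group G] [Finite G] {p : ℕ} [hp : Fact p.Prime]

theorem IsPGroup.card_dvd_pow_factorization {Q L : Subgroup G} (hQ : IsPGroup p Q)
    (hQL : Q ≤ L) : Nat.card Q ∣ p ^ (Nat.card L).factorization p := by
  obtain ⟨n, hn⟩ := IsPGroup.iff_card.mp hQ
  rw [hn]
  exact pow_dvd_pow p ((hp.out.pow_dvd_iff_le_factorization Nat.card_pos.ne').mp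
    (hn ▸ Subgroup.card_dvd_of_le hQL))

variable {H K : Subgroup G}

theorem IsSylowIn.card_eq (h : IsSylowIn p H K) :
    Nat.card H = p ^ (Nat.card K).factorization p := by
  obtain ⟨hHK, hH, hmax⟩ := h
  obtain ⟨S, hS⟩ := (hH.comap_of_injective K.subtype K.subtype_injective).exists_le_sylow
  have hHS : H ≤ (S : Subgroup K).map K.subtype := by
    simpa [Subgroup.subgroupOf_map_subtype, inf_eq_left.mpr hHK]
      using Subgroup.map_mono (f := K.subtype) hS
  rw [← hmax _ (Subgroup.map_subtype_le _) (S.isPGroup'.map K.subtype) hHS,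
    Subgroup.card_map_of_injective K.subtype_injective, S.card_eq_multiplicity]

theorem isSylowIn_iff_card_eq (hHK : H ≤ K) :
    IsSylowIn p H K ↔ Nat.card H = p ^ (Nat.card K).factorization p := by
  refine ⟨IsSylowIn.card_eq, fun hcard => ⟨hHK, IsPGroup.of_card hcard, fun Q hQK hQ hHQ => ?_⟩⟩
  refine (Subgroup.eq_of_le_of_card_ge hHQ ?_).symm
  rw [hcard]
  exact Nat.le_of_dvd (pow_pos hp.out.pos _) (hQ.card_dvd_pow_factorization hQK)

theorem IsSylowIn.eq_bot_iff (h : IsSylowIn p H K) : H = ⊥ ↔ ¬ p ∣ Nat.card K := by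
  rw [← Subgroup.card_eq_one, h.card_eq, Nat.pow_eq_one, Nat.factorization_eq_zero_iff]
  simp [hp.out.ne_one, hp.out, Nat.card_pos.ne']

end Sylow

section Orbit

variable {G α : Type*} [Group G] [MulAction G α]

theorem Subgroup.card_orbit_mul_card_inf_stabilizer (H : Subgroup G) (x : α) :
    Nat.card (orbit H x) * Nat.card ↥(H ⊓ stabilizer G x) = Nat.card H := by
  have hstab : stabilizer H x = (H ⊓ stabilizer G x).subgroupOf H := by
    rw [Subgroup.inf_subgroupOf_left]
    rfl
  rw [Nat.card_coe_set_eq, ← index_stabilizer, hstab,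
    ← Nat.card_congr (Subgroup.subgroupOfEquivOfLe inf_le_left).toEquiv, Subgroup.index_mul_card]

theorem card_fiber_orbitRel_eq (i : orbitRel.Quotient G α) :
    Nat.card {a // (Quotient.mk'' a : orbitRel.Quotient G α) = i} = Nat.card i.orbit :=
  Nat.card_congr (Equiv.subtypeEquivRight fun _ => orbitRel.Quotient.mem_orbit.symm)

variable [Finite G] {p : ℕ} [hp : Fact p.Prime] {P K : Subgroup G}

theorem IsSylowIn.card_orbit_mul_card_inf_stabilizer (h : IsSylowIn p P K) (x : α) :
    Nat.card (orbit P x) * Nat.card ↥(P ⊓ stabilizer G x) =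
      p ^ (Nat.card (orbit K x)).factorization p *
        p ^ (Nat.card ↥(K ⊓ stabilizer G x)).factorization p := by
  have hK := K.card_orbit_mul_card_inf_stabilizer x
  have hK0 := mul_ne_zero_iff.mp (hK ▸ Nat.card_pos.ne')
  rw [P.card_orbit_mul_card_inf_stabilizer, h.card_eq, ← hK,
    Nat.factorization_mul hK0.1 hK0.2, Finsupp.add_apply, pow_add]

theorem IsSylowIn.inf_stabilizer_iff (h : IsSylowIn p P K) (x : α) :
    IsSylowIn p (P ⊓ stabilizer G x) (K ⊓ stabilizer G x) ↔
      Nat.card (orbit P x) = p ^ (Nat.card (orbit K x)).factorization p := by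
  have hP := h.card_orbit_mul_card_inf_stabilizer x
  rw [isSylowIn_iff_card_eq (inf_le_inf_right _ h.1)]
  constructor
  · intro hcard
    rw [hcard] at hP
    exact Nat.eq_of_mul_eq_mul_right (pow_pos hp.out.pos _) hP
  · intro hcard
    rw [hcard] at hP
    exact Nat.eq_of_mul_eq_mul_left (pow_pos hp.out.pos _) hP

theorem IsSylowIn.pow_factorization_card_orbit_dvd (h : IsSylowIn p P K) (x : α) :
    p ^ (Nat.card (orbit K x)).factorization p ∣ Nat.card (orbit P x) := by
  have hPx : Nat.card ↥(P ⊓ stabilizer G x) ∣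
      p ^ (Nat.card ↥(K ⊓ stabilizer G x)).factorization p :=
    (h.2.1.to_le inf_le_left).card_dvd_pow_factorization (inf_le_inf_right _ h.1)
  refine Nat.dvd_of_mul_dvd_mul_right (Nat.card_pos (α := ↥(P ⊓ stabilizer G x))) ?_
  rw [h.card_orbit_mul_card_inf_stabilizer x]
  exact mul_dvd_mul_left _ hPx

theorem IsSylowIn.card_orbit_eq_of_lt (h : IsSylowIn p P K) (x : α)
    (hlt : Nat.card (orbit K x) < p ^ ((Nat.card (orbit K x)).factorization p + 1)) :
    Nat.card (orbit P x) = p ^ (Nat.card (orbit K x)).factorization p := by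
  have : Finite (orbit P x) := Set.finite_range (· • x) |>.to_subtype
  obtain ⟨j, hj⟩ := h.2.1.card_orbit x
  have hdvd := h.pow_factorization_card_orbit_dvd x
  have hle : Nat.card (orbit P x) ≤ Nat.card (orbit K x) :=
    Nat.card_mono (Set.finite_range _) (by rintro _ ⟨g, rfl⟩; exact ⟨⟨g, h.1 g.2⟩, rfl⟩)
  rw [hj, Nat.pow_dvd_pow_iff_le_right hp.out.one_lt] at hdvd
  rw [hj] at hle ⊢
  have := (Nat.pow_lt_pow_iff_right hp.out.one_lt).mp (hle.trans_lt hlt)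
  congr 1
  omega

end Orbit

namespace Equiv.Perm

variable {Ω : Type*}

section Young

variable {ι : Type*}

def youngSubgroup (f : Ω → ι) : Subgroup (Perm Ω) where
  carrier := {g | f ∘ g = f}
  one_mem' := rfl
  mul_mem' {a b} (ha : f ∘ a = f) (hb : f ∘ b = f) := by
    change f ∘ (a * b) = f
    rw [coe_mul, ← Function.comp_assoc, ha, hb]
  inv_mem' {a} (ha : f ∘ a = f) := by
    change f ∘ ⇑a⁻¹ = f
    conv_lhs => rw [← ha]
    rw [Function.comp_assoc, ← coe_mul, mul_inv_cancel, coe_one, Function.comp_id]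

theorem swap_mem_youngSubgroup [DecidableEq Ω] {f : Ω → ι} {x y : Ω} (h : f x = f y) :
    swap x y ∈ youngSubgroup f := by
  ext a
  rcases eq_or_ne a x with rfl | hax
  · simp [h]
  rcases eq_or_ne a y with rfl | hay
  · simp [h]
  simp [swap_apply_of_ne_of_ne hax hay]

theorem card_youngSubgroup [Finite Ω] [Finite ι] {f : Ω → ι} {n : ℕ}
    (hf : ∀ i, Nat.card {a // f a = i} = n) : Nat.card (youngSubgroup f) = n ! ^ Nat.card ι := by
  classical
  have := Fintype.ofFinite Ω
  have := Fintype.ofFinite ι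
  have h := DomMulAct.stabilizer_card f
  simp only [← Nat.card_eq_fintype_card, hf, Finset.prod_const, Finset.card_univ] at h
  exact h

theorem le_youngSubgroup_orbitRel (P : Subgroup (Perm Ω)) :
    P ≤ youngSubgroup (Quotient.mk'' : Ω → orbitRel.Quotient P Ω) :=
  fun g hg => funext fun _ => Quotient.sound' ⟨⟨g, hg⟩, rfl⟩

end Young

theorem eq_bot_iff_card_orbit_eq_one {H : Subgroup (Perm Ω)} :
    H = ⊥ ↔ ∀ x : Ω, Nat.card (orbit H x) = 1 := by
  constructor
  · rintro rfl x
    have : orbit (⊥ : Subgroup (Perm Ω)) x = {x} := by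
      ext y
      simp [mem_orbit_iff, eq_comm]
    rw [this, Nat.card_unique]
  · intro h
    refine (Subgroup.eq_bot_iff_forall H).mpr fun g hg => Equiv.ext fun x => ?_
    have := (Nat.card_eq_one_iff_unique.mp (h x)).1
    exact congrArg Subtype.val
      (Subsingleton.elim (⟨(⟨g, hg⟩ : H) • x, mem_orbit x _⟩ : orbit H x) ⟨x, mem_orbit_self x⟩)

variable [Fintype Ω] [DecidableEq Ω]

theorem two_mul_card_alternatingGroup_inf {H : Subgroup (Perm Ω)} {g : Perm Ω} (hgH : g ∈ H)
    (hg : sign g = -1) : 2 * Nat.card ↥(alternatingGroup Ω ⊓ H) = Nat.card H := by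
  have hmap : H.map sign = ⊤ := by
    rw [eq_top_iff]
    rintro u -
    rcases Int.units_eq_one_or u with rfl | rfl
    · exact one_mem _
    · exact ⟨g, hgH, hg⟩
  have hrel : (alternatingGroup Ω).relIndex H = 2 := by
    rw [alternatingGroup, Subgroup.relIndex_ker, hmap, Subgroup.card_top,
      Nat.card_eq_fintype_card, Fintype.card_units_int]
  -- `relIndex_inf_mul_relIndex` along `⊥ ≤ alternatingGroup Ω ⊓ H ≤ H`
  rw [← hrel, mul_comm, ← Subgroup.relIndex_bot_left, Subgroup.relIndex_inf_mul_relIndex,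
    bot_inf_eq, Subgroup.relIndex_bot_left]

theorem card_orbit_alternatingGroup (h3 : 3 ≤ Fintype.card Ω) (x : Ω) :
    Nat.card (orbit (alternatingGroup Ω) x) = Fintype.card Ω := by
  have := alternatingGroup.isPretransitive_of_three_le_card Ω (by rwa [Nat.card_eq_fintype_card])
  rw [orbit_eq_univ, Nat.card_coe_set_eq, Set.ncard_univ, Nat.card_eq_fintype_card]

theorem not_dvd_card_alternatingGroup_iff {p : ℕ} (hp : p.Prime) (h3 : 3 ≤ Fintype.card Ω) :
    ¬ p ∣ Nat.card (alternatingGroup Ω) ↔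
      Fintype.card Ω < p ∨ (Fintype.card Ω = 3 ∧ p = 2) := by
  have : Nontrivial Ω := Fintype.one_lt_card_iff_nontrivial.mp (by omega)
  have hA : 2 * Nat.card (alternatingGroup Ω) = (Fintype.card Ω)! := by
    rw [two_mul_nat_card_alternatingGroup, Nat.card_perm, Nat.card_eq_fintype_card]
  constructor
  · intro hpA
    by_contra! hcon
    rcases eq_or_ne p 2 with rfl | hp2
    · have h4 : 4 ∣ (Fintype.card Ω)! :=
        Nat.dvd_factorial (by norm_num) (by have := hcon.2; omega)
      omega
    · have hpd : p ∣ 2 * Nat.card (alternatingGroup Ω) := hA ▸ hp.dvd_factorial.mpr hcon.1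
      rcases hp.dvd_mul.mp hpd with h2 | h2
      · exact hp2 ((Nat.prime_dvd_prime_iff_eq hp Nat.prime_two).mp h2)
      · exact hpA h2
  · rintro (hlt | ⟨hd, rfl⟩) hpA
    · exact absurd (hp.dvd_factorial.mp (hA ▸ dvd_mul_of_dvd_right hpA 2)) (by omega)
    · rw [hd, show (3 : ℕ)! = 6 from rfl] at hA
      omega

theorem pow_factorization_factorial_dvd_card {p : ℕ} [Fact p.Prime] {P H : Subgroup (Perm Ω)}
    (hP : IsSylowIn p P (alternatingGroup Ω)) (hPH : P ≤ H) {g : Perm Ω} (hgH : g ∈ H)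
    (hg : sign g = -1) : p ^ (Fintype.card Ω)!.factorization p ∣ Nat.card H := by
  have : Nontrivial Ω := by
    by_contra hΩ
    rw [not_nontrivial_iff_subsingleton] at hΩ
    rw [Subsingleton.elim g 1, sign_one] at hg
    exact absurd hg (by decide)
  rw [← Nat.card_eq_fintype_card, ← Nat.card_perm, ← two_mul_nat_card_alternatingGroup,
    Nat.factorization_mul two_ne_zero Nat.card_pos.ne', Finsupp.add_apply, pow_add,
    ← two_mul_card_alternatingGroup_inf hgH hg]
  exact mul_dvd_mul (Nat.ordProj_dvd 2 p)
    (hP.card_eq ▸ Subgroup.card_dvd_of_le (le_inf hP.1 hPH))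

theorem lt_pow_succ_of_card_orbit_eq {p s : ℕ} [hp : Fact p.Prime] {P : Subgroup (Perm Ω)}
    (hP : IsSylowIn p P (alternatingGroup Ω)) (hs : s ≠ 0)
    (horb : ∀ x : Ω, Nat.card (orbit P x) = p ^ s) : Fintype.card Ω < p ^ (s + 1) := by
  set f : Ω → orbitRel.Quotient P Ω := Quotient.mk''
  set m := Nat.card (orbitRel.Quotient P Ω)
  have hfib : ∀ i, Nat.card {a // f a = i} = p ^ s := by
    intro i
    rw [card_fiber_orbitRel_eq, orbitRel.Quotient.orbit_eq_orbit_out i Quotient.out_eq', horb]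
  have hcard : Fintype.card Ω = p ^ s * m := by
    rw [← Nat.card_eq_fintype_card, Nat.card_eq_card_mul_of_card_fiber hfib, mul_comm]
  rcases isEmpty_or_nonempty Ω with _ | ⟨⟨x⟩⟩
  · rw [Fintype.card_eq_zero]
    exact pow_pos hp.out.pos _
  have : Nontrivial {a // f a = f x} :=
    Finite.one_lt_card_iff_nontrivial.mp (hfib _ ▸ Nat.one_lt_pow hs hp.out.one_lt)
  obtain ⟨⟨y, hy⟩, hxy⟩ := exists_ne (⟨x, rfl⟩ : {a // f a = f x})
  have hdvd := pow_factorization_factorial_dvd_card hP (le_youngSubgroup_orbitRel P)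
    (swap_mem_youngSubgroup hy) (sign_swap fun h => hxy (Subtype.ext h))
  rw [card_youngSubgroup hfib, hcard, hp.out.pow_dvd_iff_le_factorization (by positivity),
    Nat.factorization_pow, Finsupp.smul_apply, smul_eq_mul] at hdvd
  calc Fintype.card Ω = p ^ s * m := hcard
    _ < p ^ s * p := Nat.mul_lt_mul_of_pos_left
      (Nat.lt_of_factorization_factorial_pow_mul_le hp.out hdvd) (pow_pos hp.out.pos _)
    _ = p ^ (s + 1) := (pow_succ p s).symm

theorem card_lt_or_of_forall_card_orbit_eq {p s : ℕ} [hp : Fact p.Prime]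
    {P : Subgroup (Perm Ω)} (hP : IsSylowIn p P (alternatingGroup Ω)) (h3 : 3 ≤ Fintype.card Ω)
    (horb : ∀ x : Ω, Nat.card (orbit P x) = p ^ s) :
    Fintype.card Ω < p ∨ (1 ≤ s ∧ Fintype.card Ω < p ^ (s + 1)) ∨
      (Fintype.card Ω = 3 ∧ p = 2) := by
  rcases eq_or_ne s 0 with rfl | hs0
  · have hbot : P = ⊥ := eq_bot_iff_card_orbit_eq_one.mpr (by simpa using horb)
    have := (not_dvd_card_alternatingGroup_iff hp.out h3).mp (hP.eq_bot_iff.mp hbot)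
    tauto
  · exact Or.inr (Or.inl ⟨one_le_iff_ne_zero.mpr hs0, lt_pow_succ_of_card_orbit_eq hP hs0 horb⟩)

theorem card_orbit_eq_of_card_lt_or {p s : ℕ} [hp : Fact p.Prime]
    {P : Subgroup (Perm Ω)} (hP : IsSylowIn p P (alternatingGroup Ω)) (h3 : 3 ≤ Fintype.card Ω)
    (hs : (Fintype.card Ω).factorization p = s)
    (h : Fintype.card Ω < p ∨ (1 ≤ s ∧ Fintype.card Ω < p ^ (s + 1)) ∨
      (Fintype.card Ω = 3 ∧ p = 2)) (x : Ω) :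
    Nat.card (orbit P x) = p ^ s := by
  obtain hlt | ⟨hd, rfl⟩ : Fintype.card Ω < p ^ (s + 1) ∨ (Fintype.card Ω = 3 ∧ p = 2) := by
    rcases h with hlt | ⟨-, hlt⟩ | hd
    · exact Or.inl (hlt.trans_le (Nat.le_self_pow (succ_ne_zero s) p))
    · exact Or.inl hlt
    · exact Or.inr hd
  · rw [← hs, ← card_orbit_alternatingGroup h3 x]
    exact hP.card_orbit_eq_of_lt x (by rwa [card_orbit_alternatingGroup h3, hs])
  · have hbot : P = ⊥ :=
      hP.eq_bot_iff.mpr ((not_dvd_card_alternatingGroup_iff hp.out h3).mpr (Or.inr ⟨hd, rfl⟩))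
    have hs0 : s = 0 := by
      rw [← hs, hd]
      exact Nat.factorization_eq_zero_of_not_dvd (by norm_num)
    rw [hs0, pow_zero]
    exact eq_bot_iff_card_orbit_eq_one.mp hbot x

end Equiv.Perm

/-- For `F = Alt(Ω)` with `|Ω| = d ≥ 3`, a `p`-Sylow subgroup `F(p)` of `F`, and `p^s`
the maximal power of `p` dividing `d`: the stabilizer `F(p)_ω` is a `p`-Sylow subgroup
of `F_ω` for all `ω` iff `p > d`, or `s ≥ 1` and `p^{s+1} > d`, or `(d,p) = (3,2)`. -/
theorem stmt5 {Ω : Type*} [Fintype Ω] [DecidableEq Ω] (p d s : ℕ) (hp : p.Prime)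
    (hd : Fintype.card Ω = d) (hd3 : 3 ≤ d)
    (hs : p ^ s ∣ d ∧ ¬ p ^ (s + 1) ∣ d)
    (Fp : Subgroup (Equiv.Perm Ω)) (hSylow : IsSylowIn p Fp (alternatingGroup Ω)) :
    (∀ ω : Ω,
        IsSylowIn p (Fp ⊓ MulAction.stabilizer (Equiv.Perm Ω) ω)
          (alternatingGroup Ω ⊓ MulAction.stabilizer (Equiv.Perm Ω) ω)) ↔
      d < p ∨ (1 ≤ s ∧ d < p ^ (s + 1)) ∨ (d = 3 ∧ p = 2) := by
  have := Fact.mk hp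
  subst hd
  have hsd : (Fintype.card Ω).factorization p = s :=
    (multiplicity_eq_factorization hp (by omega)).symm.trans
      (multiplicity_eq_of_dvd_of_not_dvd hs.1 hs.2)
  have hiff : ∀ ω : Ω, IsSylowIn p (Fp ⊓ stabilizer (Perm Ω) ω)
      (alternatingGroup Ω ⊓ stabilizer (Perm Ω) ω) ↔ Nat.card (orbit Fp ω) = p ^ s := by
    intro ω
    rw [hSylow.inf_stabilizer_iff, Perm.card_orbit_alternatingGroup hd3, hsd]
  rw [forall_congr' hiff]
  exact ⟨Perm.card_lt_or_of_forall_card_orbit_eq hSylow hd3,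
    Perm.card_orbit_eq_of_card_lt_or hSylow hd3 hsd⟩
end

section
/- Let Ω be a finite set with |Ω| = d ≥ 1, let p be a prime, and let P be a p-Sylow subgroup of Sym(Ω). Then the maximal cardinality of an orbit of P on Ω equals the largest power of p that is at most d, i.e., max over ω ∈ Ω of |P·ω| equals p^{⌊log_p d⌋}. -/
theorem IsPGroup.card_orbit_le_pow_log {G α : Type*} [Group G] [MulAction G α] [Finite α]
    {p : ℕ} (hp : p.Prime) (hG : IsPGroup p G) (a : α) :
    Nat.card (MulAction.orbit G a) ≤ p ^ Nat.log p (Nat.card α) := by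
  have : Fact p.Prime := ⟨hp⟩
  obtain ⟨n, hn⟩ := hG.card_orbit a
  rw [hn]
  refine Nat.pow_le_pow_right hp.pos (Nat.le_log_of_pow_le hp.one_lt ?_)
  rw [← hn]
  exact Nat.card_le_card_of_injective _ Subtype.val_injective

theorem IsSylowIn.exists_sylow_coe_eq {G : Type*} [Group G] {p : ℕ} {P : Subgroup G}
    (h : IsSylowIn p P ⊤) : ∃ S : Sylow p G, (S : Subgroup G) = P :=
  ⟨⟨P, h.2.1, fun hQ hle => h.2.2 _ le_top hQ hle⟩, rfl⟩

theorem Sylow.exists_conj_mem {G : Type*} [Group G] [Finite G] {p : ℕ} [Fact p.Prime]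
    (P : Sylow p G) {g : G} (hg : IsPGroup p (Subgroup.zpowers g)) :
    ∃ c : G, c * g * c⁻¹ ∈ P := by
  obtain ⟨Q, hgQ⟩ := hg.exists_le_sylow
  obtain ⟨c, rfl⟩ := MulAction.exists_smul_eq G Q P
  refine ⟨c, ?_⟩
  rw [← SetLike.mem_coe, Sylow.coe_smul]
  exact Set.smul_mem_smul_set (a := MulAut.conj c) (hgQ (Subgroup.mem_zpowers g))

theorem Equiv.Perm.exists_isCycle_card_support_eq {α : Type*} [Fintype α] [DecidableEq α]
    {n : ℕ} (h2 : 2 ≤ n) (hn : n ≤ Fintype.card α) :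
    ∃ σ : Equiv.Perm α, σ.IsCycle ∧ σ.support.card = n := by
  obtain ⟨σ, hσ⟩ := (Equiv.Perm.exists_with_cycleType_iff α (m := {n})).mpr
    ⟨by simpa using hn, by simpa using h2⟩
  refine ⟨σ, Equiv.Perm.card_cycleType_eq_one.mp (by simp [hσ]), ?_⟩
  rw [← Equiv.Perm.sum_cycleType, hσ, Multiset.sum_singleton]

theorem Equiv.Perm.IsCycle.card_support_le_card_orbit_s6 {α : Type*} [Fintype α] [DecidableEq α]
    {H : Subgroup (Equiv.Perm α)} {σ : Equiv.Perm α} (hσ : σ.IsCycle) (hσH : σ ∈ H)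
    {a : α} (ha : a ∈ σ.support) :
    σ.support.card ≤ Nat.card (MulAction.orbit H a) := by
  rw [Nat.card_coe_set_eq, ← Set.ncard_coe_finset]
  refine Set.ncard_le_ncard (fun b hb => ?_) (Set.toFinite _)
  obtain ⟨n, rfl⟩ := hσ.sameCycle (Equiv.Perm.mem_support.mp ha) (Equiv.Perm.mem_support.mp hb)
  exact ⟨⟨σ ^ n, H.zpow_mem hσH n⟩, rfl⟩

/-- For a `p`-Sylow subgroup `P` of `Sym(Ω)` with `|Ω| = d ≥ 1`, the maximal size of an
orbit of `P` on `Ω` equals `p ^ ⌊log_p d⌋`, the largest power of `p` at most `d`. -/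
theorem stmt6 {Ω : Type*} [Fintype Ω] (p : ℕ) (hp : p.Prime)
    (hd : 1 ≤ Fintype.card Ω)
    (P : Subgroup (Equiv.Perm Ω)) (hSylow : IsSylowIn p P ⊤) :
    (∀ ω : Ω,
        Nat.card (MulAction.orbit P ω) ≤ p ^ Nat.log p (Fintype.card Ω)) ∧
      ∃ ω : Ω, Nat.card (MulAction.orbit P ω) = p ^ Nat.log p (Fintype.card Ω) := by
  classical
  have : Fact p.Prime := ⟨hp⟩
  obtain ⟨S, rfl⟩ := hSylow.exists_sylow_coe_eq
  set m := Nat.log p (Fintype.card Ω)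
  have upper (ω : Ω) : Nat.card (MulAction.orbit S ω) ≤ p ^ m := by
    simpa [Nat.card_eq_fintype_card] using S.isPGroup'.card_orbit_le_pow_log hp ω
  refine ⟨upper, ?_⟩
  suffices ∃ ω : Ω, p ^ m ≤ Nat.card (MulAction.orbit S ω) from
    this.imp fun ω h => (upper ω).antisymm h
  rcases Nat.eq_zero_or_pos m with hm | hm
  · obtain ⟨ω⟩ := Fintype.card_pos_iff.mp hd
    refine ⟨ω, ?_⟩
    rw [hm, pow_zero, Nat.one_le_iff_ne_zero, Nat.card_ne_zero]
    exact ⟨(MulAction.nonempty_orbit ω).to_subtype, Set.toFinite _⟩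
  obtain ⟨σ, hσ, hσcard⟩ := Equiv.Perm.exists_isCycle_card_support_eq
    (n := p ^ m) (hp.two_le.trans (Nat.le_self_pow hm.ne' p))
    (Nat.pow_log_le_self p (by omega))
  have hσp : IsPGroup p (Subgroup.zpowers σ) :=
    IsPGroup.of_card (by rw [Nat.card_zpowers, hσ.orderOf, hσcard])
  obtain ⟨c, hc⟩ := S.exists_conj_mem hσp
  obtain ⟨ω, hω⟩ := (hσ.conj (g := c)).nonempty_support
  refine ⟨ω, ?_⟩
  calc p ^ m = (c * σ * c⁻¹).support.card := by rw [Equiv.Perm.card_support_conj, hσcard]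
    _ ≤ _ := hσ.conj.card_support_le_card_orbit_s6 hc hω
end

section
/- Let G be a topological group that is locally compact, totally disconnected (Hausdorff) and residually discrete, meaning that the intersection of all open normal subgroups of G is trivial. Let K ≤ G be a subgroup that is compact (as a subset of G). Then the commensurator of K in G equals the union, over all subgroups L ≤ K that are open in K, of the normalizers N_G(L); that is, g ∈ G satisfies [K : K ∩ gKg⁻¹] < ∞ and [gKg⁻¹ : gKg⁻¹ ∩ K] < ∞ if and only if g normalizes some open subgroup of K. -/
/-!
If `g` normalizes an open subgroup `L` of the compact group `K`, then `L` has finite index in `K`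
and lies in `K ∩ gKg⁻¹ ∩ g⁻¹Kg`, so `g` commensurates `K`. Conversely, if `g` commensurates `K`,
then `H = K ∩ gKg⁻¹ ∩ g⁻¹Kg` is a closed subgroup of finite index in `K`, hence open in `K`.
Residual discreteness and compactness of `K \ H` give an open normal subgroup `N` of `G` with
`K ∩ N ≤ H`, and `g` normalizes the open subgroup `K ∩ N` of `K`.
-/

open Subgroup

section TopologicalGroup

variable {G : Type*} [Group G] [TopologicalSpace G]

theorem IsCompact.exists_openNormalSubgroup_disjoint [SeparatelyContinuousMul G]
    (hRD : (⨅ (N : Subgroup G) (_ : N.Normal ∧ IsOpen (N : Set G)), N) = ⊥)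
    {C : Set G} (hC : IsCompact C) (h1 : (1 : G) ∉ C) :
    ∃ N : OpenNormalSubgroup G, Disjoint C N := by
  have : Nonempty (OpenNormalSubgroup G) := ⟨⟨⊤, normal_top⟩⟩
  have hInter : C ∩ ⋂ N : OpenNormalSubgroup G, (N : Set G) = ∅ := by
    refine Set.eq_empty_of_forall_notMem fun x ⟨hxC, hxN⟩ => h1 ?_
    have hx : x ∈ (⨅ (N : Subgroup G) (_ : N.Normal ∧ IsOpen (N : Set G)), N) :=
      mem_iInf.mpr fun N => mem_iInf.mpr fun hN =>
        Set.mem_iInter.mp hxN ⟨⟨N, hN.2⟩, hN.1⟩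
    rw [hRD, mem_bot] at hx
    rwa [← hx]
  obtain ⟨N, hN⟩ := hC.elim_directed_family_closed _ (fun N => N.toOpenSubgroup.isClosed) hInter
    (directed_of_isDirected_ge fun _ _ h => h)
  exact ⟨N, Set.disjoint_iff_inter_eq_empty.mpr hN⟩

theorem IsCompact.exists_openNormalSubgroup_inf_le [SeparatelyContinuousMul G]
    (hRD : (⨅ (N : Subgroup G) (_ : N.Normal ∧ IsOpen (N : Set G)), N) = ⊥)
    {K : Subgroup G} (hK : IsCompact (K : Set G)) {H : Subgroup G}
    (hH : IsOpen ((↑) ⁻¹' (H : Set G) : Set K)) :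
    ∃ N : OpenNormalSubgroup G, K ⊓ (N : Subgroup G) ≤ H := by
  obtain ⟨O, hO, hOH⟩ := isOpen_induced_iff.mp hH
  have mem_O_iff (x : K) : (x : G) ∈ O ↔ (x : G) ∈ H := Set.ext_iff.mp hOH x
  have h1 : (1 : G) ∉ (K : Set G) \ O := fun h => h.2 ((mem_O_iff 1).mpr (one_mem H))
  obtain ⟨N, hN⟩ := (hK.diff hO).exists_openNormalSubgroup_disjoint hRD h1
  refine ⟨N, fun x ⟨hxK, hxN⟩ => (mem_O_iff ⟨x, hxK⟩).mp ?_⟩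
  by_contra hxO
  exact Set.disjoint_left.mp hN ⟨hxK, hxO⟩ hxN

theorem IsCompact.relIndex_ne_zero_of_isOpen [IsTopologicalGroup G] {K : Subgroup G}
    (hK : IsCompact (K : Set G)) {L : Subgroup G} (hL : IsOpen ((↑) ⁻¹' (L : Set G) : Set K)) :
    L.relIndex K ≠ 0 := by
  have : CompactSpace K := isCompact_iff_compactSpace.mp hK
  have : Finite (K ⧸ L.subgroupOf K) := quotient_finite_of_isOpen _ hL
  exact index_ne_zero_of_finite

theorem Subgroup.isOpen_subtype_preimage_of_isClosed_of_relIndex_ne_zero [IsTopologicalGroup G]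
    {K H : Subgroup G} (hH : IsClosed (H : Set G)) (hHK : H.relIndex K ≠ 0) :
    IsOpen ((↑) ⁻¹' (H : Set G) : Set K) :=
  have : (H.subgroupOf K).FiniteIndex := ⟨hHK⟩
  (H.subgroupOf K).isOpen_of_isClosed_of_finiteIndex (hH.preimage continuous_subtype_val)

end TopologicalGroup

section Conjugation

variable {G : Type*} [Group G] {K L : Subgroup G} {g : G}

theorem Subgroup.le_map_conj_of_mem_normalizer (hLK : L ≤ K) (hg : g ∈ normalizer (L : Set G)) :
    L ≤ K.map (MulAut.conj g).toMonoidHom :=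
  (mem_normalizer_iff_map_conj_eq.mp hg).ge.trans (map_mono hLK)

theorem Subgroup.le_comap_conj_of_mem_normalizer (hLK : L ≤ K) (hg : g ∈ normalizer (L : Set G)) :
    L ≤ K.comap (MulAut.conj g).toMonoidHom :=
  map_le_iff_le_comap.mp ((mem_normalizer_iff_map_conj_eq.mp hg).le.trans hLK)

theorem Subgroup.mem_normalizer_inf_of_le {N : Subgroup G} [N.Normal]
    (h : K ⊓ N ≤ K.map (MulAut.conj g).toMonoidHom ⊓ K.comap (MulAut.conj g).toMonoidHom) :
    g ∈ normalizer ((K ⊓ N : Subgroup G) : Set G) := by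
  refine mem_normalizer_iff_map_conj_eq.mpr (le_antisymm ?_ fun x hx => ?_)
  · rintro _ ⟨x, hx, rfl⟩
    exact ⟨(h hx).2, ‹N.Normal›.conj_mem x hx.2 g⟩
  · obtain ⟨k, hk, rfl⟩ := (h hx).1
    refine ⟨k, ⟨hk, ?_⟩, rfl⟩
    simpa [mul_assoc] using ‹N.Normal›.conj_mem _ hx.2 g⁻¹

end Conjugation

theorem stmt9_general {G : Type*} [Group G] [TopologicalSpace G] [IsTopologicalGroup G] [T2Space G]
    (hRD : (⨅ (N : Subgroup G) (_ : N.Normal ∧ IsOpen (N : Set G)), N) = ⊥)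
    (K : Subgroup G) (hK : IsCompact (K : Set G)) :
    ∀ g : G,
      ((K.map (MulAut.conj g).toMonoidHom).relIndex K ≠ 0 ∧
          K.relIndex (K.map (MulAut.conj g).toMonoidHom) ≠ 0) ↔
        ∃ L : Subgroup G, L ≤ K ∧ IsOpen ((↑) ⁻¹' (L : Set G) : Set K) ∧
          g ∈ Subgroup.normalizer (L : Set G) := by
  intro g
  set c := (MulAut.conj g).toMonoidHom
  rw [← relIndex_comap]
  constructor
  · rintro ⟨hmap, hcomap⟩
    have hconj : Continuous c := IsTopologicalGroup.continuous_conj g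
    have hclosed : IsClosed ((K.map c ⊓ K.comap c : Subgroup G) : Set G) :=
      (hK.image hconj).isClosed.inter (hK.isClosed.preimage hconj)
    obtain ⟨N, hN⟩ := hK.exists_openNormalSubgroup_inf_le hRD <|
      isOpen_subtype_preimage_of_isClosed_of_relIndex_ne_zero hclosed
        (relIndex_inf_ne_zero hmap hcomap)
    refine ⟨K ⊓ N, inf_le_left, ?_, mem_normalizer_inf_of_le hN⟩
    convert N.isOpen.preimage continuous_subtype_val using 1
    ext x
    simp
  · rintro ⟨L, hLK, hL, hg⟩
    have hLfin := hK.relIndex_ne_zero_of_isOpen hL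
    exact ⟨mt (relIndex_eq_zero_of_le_left (le_map_conj_of_mem_normalizer hLK hg)) hLfin,
      mt (relIndex_eq_zero_of_le_left (le_comap_conj_of_mem_normalizer hLK hg)) hLfin⟩

/-- **Caprace–Monod / Caprace–Reid–Willis.** Let `G` be a residually discrete, locally
compact, totally disconnected topological group and `K ≤ G` a compact subgroup. Then an
element `g ∈ G` commensurates `K` (i.e. `[K : K ∩ gKg⁻¹] < ∞` and
`[gKg⁻¹ : gKg⁻¹ ∩ K] < ∞`) if and only if `g` normalizes some subgroup of `K` that is
open in `K`; that is, `Comm_G(K) = ⋃_{L ≤ₒ K} N_G(L)`. -/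
theorem stmt9 {G : Type*} [Group G] [TopologicalSpace G] [IsTopologicalGroup G]
    [LocallyCompactSpace G] [TotallyDisconnectedSpace G] [T2Space G]
    (hRD : (⨅ (N : Subgroup G) (_ : N.Normal ∧ IsOpen (N : Set G)), N) = ⊥)
    (K : Subgroup G) (hK : IsCompact (K : Set G)) :
    ∀ g : G,
      ((K.map (MulAut.conj g).toMonoidHom).relIndex K ≠ 0 ∧
          K.relIndex (K.map (MulAut.conj g).toMonoidHom) ≠ 0) ↔
        ∃ L : Subgroup G, L ≤ K ∧ IsOpen ((↑) ⁻¹' (L : Set G) : Set K) ∧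
          g ∈ Subgroup.normalizer (L : Set G) :=
  stmt9_general hRD K hK
end
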